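/- arXiv:1201.1713 — 5 statements merged into one kernel-verified Lean document; each statement's English description precedes it below -/
import Mathlib

section
/- For every infinite cardinal λ, if 𝒜 ⊆ 𝒫(λ) with |𝒜| ≤ λ, 𝒜 is closed under finite intersections, and every member of 𝒜 has cardinality λ, then there exists a set Y ⊆ λ such that no A ∈ 𝒜 satisfies |A \ Y| < λ and no A ∈ 𝒜 satisfies |A \ (λ \ Y)| < λ; in other words, 𝒜 does not generate (mod sets of size < λ) a uniform ultrafilter on λ. -/
open Cardinal Set

universe u

variable {α : Type u}

/- Recursion body: pick a pair of fresh distinct elements of `As i`. -/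
open Classical in
noncomputable def splitBody [Nonempty α] (As : (#α).ord.ToType → Set α)
    (i : (#α).ord.ToType) (F : ∀ j, j < i → α × α) : α × α :=
  if h : ∃ p : α × α, p.1 ∈ As i ∧ p.2 ∈ As i ∧ p.1 ≠ p.2 ∧
      ∀ j (hj : j < i), p.1 ≠ (F j hj).1 ∧ p.1 ≠ (F j hj).2 ∧
        p.2 ≠ (F j hj).1 ∧ p.2 ≠ (F j hj).2
  then h.choose else Classical.arbitrary _

noncomputable def splitF [Nonempty α] (As : (#α).ord.ToType → Set α) :
    (#α).ord.ToType → α × α :=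
  WellFoundedLT.fix (splitBody As)

theorem splitF_eq [Nonempty α] (As : (#α).ord.ToType → Set α) (i : (#α).ord.ToType) :
    splitF As i = splitBody As i (fun j _ => splitF As j) :=
  WellFoundedLT.fix_eq _ i

theorem splitF_spec [Infinite α] (As : (#α).ord.ToType → Set α)
    (hA : ∀ i, #(As i) = #α) (i : (#α).ord.ToType) :
    (splitF As i).1 ∈ As i ∧ (splitF As i).2 ∈ As i ∧ (splitF As i).1 ≠ (splitF As i).2 ∧
    ∀ j, j < i → (splitF As i).1 ≠ (splitF As j).1 ∧ (splitF As i).1 ≠ (splitF As j).2 ∧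
      (splitF As i).2 ≠ (splitF As j).1 ∧ (splitF As i).2 ≠ (splitF As j).2 := by
  have h : ∃ p : α × α, p.1 ∈ As i ∧ p.2 ∈ As i ∧ p.1 ≠ p.2 ∧
      ∀ j (_ : j < i), p.1 ≠ (splitF As j).1 ∧ p.1 ≠ (splitF As j).2 ∧
        p.2 ≠ (splitF As j).1 ∧ p.2 ≠ (splitF As j).2 := by
    set B : Set α := range (fun j : Iio i => (splitF As ↑j).1) ∪
        range (fun j : Iio i => (splitF As ↑j).2) with hB
    have hBcard : #B < #α := by
      refine lt_of_le_of_lt (mk_union_le _ _) ?_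
      have h1 := mk_range_le (f := fun j : Iio i => (splitF As ↑j).1)
      have h2 := mk_range_le (f := fun j : Iio i => (splitF As ↑j).2)
      have hIio : #(Iio i) < #α := mk_Iio_ord_toType i
      exact Cardinal.add_lt_of_lt (aleph0_le_mk α) (h1.trans_lt hIio) (h2.trans_lt hIio)
    have hScard : ¬ (#(As i \ B : Set α) < #α) := by
      intro hlt
      have hsub : As i ⊆ (As i \ B) ∪ B := by
        intro x hx
        by_cases hxB : x ∈ B
        · exact Or.inr hxB
        · exact Or.inl ⟨hx, hxB⟩
      have := (mk_le_mk_of_subset hsub).trans (mk_union_le _ _)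
      rw [hA i] at this
      exact absurd this (not_le_of_gt (Cardinal.add_lt_of_lt (aleph0_le_mk α) hlt hBcard))
    have hinf : (As i \ B).Infinite := by
      rw [← Set.infinite_coe_iff, Cardinal.infinite_iff]
      exact le_trans (aleph0_le_mk α) (not_lt.mp hScard)
    obtain ⟨x, hx, y, hy, hxy⟩ := hinf.nontrivial
    have notB : ∀ z ∈ As i \ B, ∀ j (_ : j < i),
        z ≠ (splitF As j).1 ∧ z ≠ (splitF As j).2 := by
      rintro z hz j hj
      constructor
      · intro he; exact hz.2 (Or.inl ⟨⟨j, hj⟩, he.symm⟩)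
      · intro he; exact hz.2 (Or.inr ⟨⟨j, hj⟩, he.symm⟩)
    exact ⟨(x, y), hx.1, hy.1, hxy, fun j hj =>
      ⟨(notB x hx j hj).1, (notB x hx j hj).2, (notB y hy j hj).1, (notB y hy j hj).2⟩⟩
  rw [splitF_eq As i]
  simp only [splitBody]
  rw [dif_pos h]
  exact h.choose_spec

/-- If `𝒜 ⊆ 𝒫(λ)` has cardinality `≤ λ`, is closed under finite
intersections, and all its members have size `λ` (for an infinite cardinal `λ`,
represented by an infinite type `α`), then there is `Y ⊆ λ` such that no `A ∈ 𝒜`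
is almost contained (mod sets of size `< λ`) in `Y` nor in its complement: `𝒜` does
not generate a uniform ultrafilter. -/
theorem stmt0 {α : Type u} [Infinite α] (𝒜 : Set (Set α))
    (hcard : #𝒜 ≤ #α)
    (hinter : ∀ A ∈ 𝒜, ∀ B ∈ 𝒜, A ∩ B ∈ 𝒜)
    (hsize : ∀ A ∈ 𝒜, #A = #α) :
    ∃ Y : Set α,
      (∀ A ∈ 𝒜, ¬ (#↥(A \ Y) < #α)) ∧
      (∀ A ∈ 𝒜, ¬ (#↥(A \ Yᶜ) < #α)) := by
  rcases eq_empty_or_nonempty 𝒜 with h𝒜 | h𝒜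
  · exact ⟨∅, fun A hA => by simp [h𝒜] at hA, fun A hA => by simp [h𝒜] at hA⟩
  have : Nonempty ↥𝒜 := h𝒜.to_subtype
  -- surjection g : α → 𝒜
  obtain ⟨f⟩ : Nonempty (↥𝒜 ↪ α) := Cardinal.le_def _ _ |>.mp hcard
  obtain ⟨g, hg⟩ : ∃ g : α → ↥𝒜, Function.Surjective g :=
    ⟨Function.invFun f, Function.invFun_surjective f.injective⟩
  -- equiv e : toType ≃ α × α
  have hcardeq : #((#α).ord.ToType) = #(α × α) := by
    rw [mk_toType, card_ord]
    simp [mul_eq_self (aleph0_le_mk α)]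
  obtain ⟨e⟩ := Cardinal.eq.mp hcardeq
  set As : (#α).ord.ToType → Set α := fun i => ↑(g (e i).2) with hAs
  have hA : ∀ i, #(As i) = #α := fun i => hsize _ (g (e i).2).2
  set F := splitF As with hF
  have spec := splitF_spec As hA
  set Y : Set α := range (fun i => (F i).1) with hY
  -- key injectivity/disjointness facts
  have fst_ne_snd : ∀ i j, (F i).1 ≠ (F j).2 := by
    intro i j
    rcases lt_trichotomy i j with h | h | h
    · exact fun he => ((spec j).2.2.2 i h).2.2.1 he.symm
    · subst h; exact (spec i).2.2.1
    · exact ((spec i).2.2.2 j h).2.1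
  have snd_inj : Function.Injective (fun i => (F i).2) := by
    intro i j he
    by_contra hne
    rcases lt_or_gt_of_ne hne with h | h
    · exact ((spec j).2.2.2 i h).2.2.2 he.symm
    · exact ((spec i).2.2.2 j h).2.2.2 he
  have fst_inj : Function.Injective (fun i => (F i).1) := by
    intro i j he
    by_contra hne
    rcases lt_or_gt_of_ne hne with h | h
    · exact ((spec j).2.2.2 i h).1 he.symm
    · exact ((spec i).2.2.2 j h).1 he
  refine ⟨Y, ?_, ?_⟩
  · -- A \ Y has size λ
    rintro A hA' hlt
    obtain ⟨a₀, ha₀⟩ := hg ⟨A, hA'⟩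
    set ι : α → (#α).ord.ToType := fun x => e.symm (x, a₀) with hι
    have hιinj : Function.Injective ι := fun x y h => by
      have h2 := congrArg (fun i => (e i).1) h
      simpa [hι, Equiv.apply_symm_apply] using h2
    have hAsι : ∀ x, As (ι x) = A := by
      intro x; simp [hAs, hι, ha₀]
    have hsub : range (fun x => (F (ι x)).2) ⊆ A \ Y := by
      rintro _ ⟨x, rfl⟩
      refine ⟨by rw [← hAsι x]; exact (spec (ι x)).2.1, ?_⟩
      rintro ⟨j, hj⟩
      exact fst_ne_snd j (ι x) hj
    have := (mk_le_mk_of_subset hsub)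
    rw [mk_range_eq _ (fun x y h => hιinj (snd_inj h))] at this
    exact absurd hlt (not_lt.mpr this)
  · rintro A hA' hlt
    obtain ⟨a₀, ha₀⟩ := hg ⟨A, hA'⟩
    set ι : α → (#α).ord.ToType := fun x => e.symm (x, a₀) with hι
    have hιinj : Function.Injective ι := fun x y h => by
      have h2 := congrArg (fun i => (e i).1) h
      simpa [hι, Equiv.apply_symm_apply] using h2
    have hAsι : ∀ x, As (ι x) = A := by
      intro x; simp [hAs, hι, ha₀]
    have hsub : range (fun x => (F (ι x)).1) ⊆ A \ Yᶜ := by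
      rintro _ ⟨x, rfl⟩
      refine ⟨by rw [← hAsι x]; exact (spec (ι x)).1, ?_⟩
      simp only [mem_compl_iff, not_not, hY]
      exact mem_range_self _
    have := (mk_le_mk_of_subset hsub)
    rw [mk_range_eq _ (fun x y h => hιinj (fst_inj h))] at this
    exact absurd hlt (not_lt.mpr this)
end

section
/- For every infinite cardinal λ, the ultrafilter number 𝔲_λ is strictly greater than λ, where 𝔲_λ is the minimal cardinality of a base for a uniform ultrafilter on λ. -/
/-!
If a base `ℬ` of a uniform ultrafilter on `α` had at most `#α` members, then, by transfinite
recursion along a well-order of type `#α`, we could choose injectively a point of `B` for each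
`(B, c, side) ∈ ℬ × α × {in, out}`. The set `X` of points chosen with side `in` then meets every
`B ∈ ℬ` and its complement in `#α` points, yet one of `X`, `Xᶜ` lies in the ultrafilter and so
almost contains some `B ∈ ℬ`.
-/

open Cardinal Set

theorem exists_injective_forall_mem_of_mk_le {J α : Type u} (t : J → Set α)
    (ht : ∀ j, #J ≤ #(t j)) : ∃ f : J → α, Function.Injective f ∧ ∀ j, f j ∈ t j := by
  obtain ⟨_, _, hJ⟩ := exists_ord_eq_type_lt J
  have hfresh : ∀ j (g : ∀ k, k < j → α),
      (t j \ range fun k : Iio j => g k k.2).Nonempty := fun j g =>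
    sdiff_nonempty.2 fun hsub =>
      ((mk_le_mk_of_subset hsub).trans mk_range_le).not_gt ((mk_Iio_lt j hJ).trans_le (ht j))
  set f : J → α := wellFounded_lt.fix fun j g => (hfresh j g).some
  have hf : ∀ j, f j ∈ t j \ range fun k : Iio j => f k := fun j => by
    rw [show f j = _ from wellFounded_lt.fix_eq _ j]
    exact (hfresh j fun k _ => f k).some_mem
  refine ⟨f, Function.Injective.of_lt_imp_ne fun k j hkj hfkj => ?_, fun j => (hf j).1⟩
  exact (hf j).2 ⟨⟨k, hkj⟩, hfkj⟩

theorem exists_forall_mk_inter_and_mk_diff {ι α : Type u} [Infinite α] (s : ι → Set α)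
    (hι : #ι ≤ #α) (hs : ∀ i, #α ≤ #(s i)) :
    ∃ X : Set α, ∀ i, #α ≤ #↥(s i ∩ X) ∧ #α ≤ #↥(s i \ X) := by
  have hJ : #(ι × (α ⊕ α)) ≤ #α := calc
    #(ι × (α ⊕ α)) = #ι * (#α + #α) := by simp only [mk_prod, mk_sum, lift_id]
    _ ≤ #α * (#α + #α) := by gcongr
    _ = #α := by rw [add_eq_self (aleph0_le_mk α), mul_eq_self (aleph0_le_mk α)]
  obtain ⟨f, hf, hfs⟩ :=
    exists_injective_forall_mem_of_mk_le (fun p : ι × (α ⊕ α) => s p.1) fun p => hJ.trans (hs p.1)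
  refine ⟨range fun p : ι × α => f (p.1, .inl p.2), fun i => ⟨?_, ?_⟩⟩
  · refine (mk_range_eq (fun c => f (i, .inl c)) fun c d h => ?_).ge.trans
      (mk_le_mk_of_subset <| range_subset_iff.2 fun c => ⟨hfs (i, .inl c), (i, c), rfl⟩)
    simpa using hf h
  · refine (mk_range_eq (fun c => f (i, .inr c)) fun c d h => ?_).ge.trans
      (mk_le_mk_of_subset <| range_subset_iff.2 fun c => ⟨hfs (i, .inr c), ?_⟩)
    · simpa using hf h
    · rintro ⟨p, hp⟩
      simpa using hf hp

/-- `𝔲_λ > λ` for every infinite cardinal `λ`: every base `ℬ`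
(with respect to almost-inclusion mod sets of size `< λ`) of a uniform
ultrafilter `U` on `λ` (an infinite type `α`) has cardinality `> λ`. -/
theorem stmt1 {α : Type u} [Infinite α] (U : Ultrafilter α)
    (hUuniform : ∀ A ∈ U, #A = #α)
    (ℬ : Set (Set α))
    (hℬsub : ∀ B ∈ ℬ, B ∈ U)
    (hℬbase : ∀ X ∈ U, ∃ B ∈ ℬ, #↥(B \ X) < #α) :
    #α < #ℬ := by
  by_contra! hℬ
  obtain ⟨X, hX⟩ := exists_forall_mk_inter_and_mk_diff (Subtype.val : ℬ → Set α) hℬ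
    fun B => (hUuniform B (hℬsub B B.2)).ge
  rcases U.mem_or_compl_mem X with hXU | hXU
  · obtain ⟨B, hB, hBX⟩ := hℬbase X hXU
    exact (hX ⟨B, hB⟩).2.not_gt hBX
  · obtain ⟨B, hB, hBX⟩ := hℬbase Xᶜ hXU
    exact (hX ⟨B, hB⟩).1.not_gt (sdiff_compl ▸ hBX)
end

section
/- Suppose U is a normal ultrafilter on a measurable cardinal μ and 2^μ = μ⁺. Then there exists a sequence ⟨A_α : α < μ⁺⟩ of members of U which is ⊆*-decreasing (α₀ < α₁ implies A_{α₁} ⊆* A_{α₀}, i.e., |A_{α₁} \ A_{α₀}| < μ) and which generates U: for every B ∈ U there is α < μ⁺ with A_α ⊆* B. -/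
/-!
Since `2 ^ μ = μ⁺`, the ultrafilter `U` is enumerated as `⟨g α : α < μ⁺⟩`. Normality yields
pseudo-intersections: if `⟨B γ : γ < μ⟩` lie in `U`, their diagonal intersection `D` lies in `U`,
and `D \ B γ ⊆ γ + 1` has size `< μ`. Every `α < μ⁺` has at most `μ` predecessors, so we may
recursively let `A α` be a pseudo-intersection of `{A β : β < α}` intersected with `g α`. The
`A α` are then `⊆*`-decreasing, and they generate `U` because `A α ⊆ g α`.
-/

open Cardinal Set

/-- `U` is an ultrafilter on the set of ordinals `S`. -/
def IsUltrafilterOn (S : Set Ordinal.{0}) (U : Set (Set Ordinal.{0})) : Prop :=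
  (∀ A ∈ U, A ⊆ S) ∧ S ∈ U ∧ ∅ ∉ U ∧
    (∀ A ∈ U, ∀ B ∈ U, A ∩ B ∈ U) ∧
    (∀ A ∈ U, ∀ B, A ⊆ B → B ⊆ S → B ∈ U) ∧
    (∀ A, A ⊆ S → A ∈ U ∨ S \ A ∈ U)

/-- `s` has cardinality `< μ`. -/
def cardLT (s : Set Ordinal.{0}) (μ : Cardinal.{0}) : Prop := #s < Cardinal.lift.{1,0} μ

/-- `s` has cardinality `μ`. -/
def cardEQ (s : Set Ordinal.{0}) (μ : Cardinal.{0}) : Prop := #s = Cardinal.lift.{1,0} μ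

universe u v

theorem Set.exists_surjOn_of_mk_le {α X : Type u} {T : Set α} {𝒜 : Set X}
    (hne : 𝒜.Nonempty) (h : #𝒜 ≤ #T) : ∃ f : α → X, (∀ a, f a ∈ 𝒜) ∧ SurjOn f T 𝒜 := by
  classical
  obtain ⟨e⟩ := h
  obtain ⟨x₀, hx₀⟩ := hne
  have : Nonempty 𝒜 := ⟨⟨x₀, hx₀⟩⟩
  refine ⟨fun a => if ha : a ∈ T then ((Function.invFun e : T → 𝒜) ⟨a, ha⟩ : X) else x₀,
    fun a => ?_, ?_⟩
  · dsimp only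
    split_ifs
    exacts [Subtype.prop _, hx₀]
  · intro x hx
    refine ⟨e ⟨x, hx⟩, (e ⟨x, hx⟩).2, ?_⟩
    simp only [Subtype.coe_prop, dite_true, Function.leftInverse_invFun e.injective _]

theorem Cardinal.mk_Iic_lt_of_lt_ord {μ : Cardinal.{u}} (hμ : ℵ₀ ≤ μ) {γ : Ordinal.{u}}
    (hγ : γ < μ.ord) : #(Iic γ) < lift.{u + 1} μ := by
  rw [← Order.Iio_succ, mk_Iio_ordinal, lift_lt, ← lt_ord]
  exact (isSuccLimit_ord hμ).succ_lt hγ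

theorem WellFoundedLT.exists_forall_fix {α : Type u} {X : Type v} [LT α] [WellFoundedLT α]
    {P : ∀ a : α, (∀ b < a, X) → X → Prop} (h : ∀ a prior, ∃ x, P a prior x) :
    ∃ A : α → X, ∀ a, P a (fun b _ => A b) (A a) := by
  choose F hF using h
  exact ⟨WellFoundedLT.fix F, fun a => WellFoundedLT.fix_eq F a ▸ hF a _⟩

theorem mk_le_mk_Iio_ord_succ_of_two_power_eq_succ {μ : Cardinal.{0}}
    {U : Set (Set Ordinal.{0})} (hsub : ∀ A ∈ U, A ⊆ Iio μ.ord)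
    (hch : 2 ^ μ = Order.succ μ) : #U ≤ #(Iio (Order.succ μ).ord) :=
  calc #U ≤ #(𝒫 Iio μ.ord) := mk_le_mk_of_subset hsub
    _ = #(Iio (Order.succ μ).ord) := by
      rw [mk_powerset, mk_Iio_ordinal, mk_Iio_ordinal, card_ord, card_ord, ← lift_two_power, hch]

section Normal

variable {μ : Cardinal.{0}} {U : Set (Set Ordinal.{0})}

theorem cardLT_mono {s t : Set Ordinal.{0}} (hst : s ⊆ t) (ht : cardLT t μ) : cardLT s μ :=
  (mk_le_mk_of_subset hst).trans_lt ht

theorem exists_mem_cardLT_diff_of_normal (hμ : ℵ₀ ≤ μ) (hS : Iio μ.ord ∈ U)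
    (hnormal : ∀ B : Ordinal.{0} → Set Ordinal.{0}, (∀ γ < μ.ord, B γ ∈ U) →
      {β | β < μ.ord ∧ ∀ γ < β, β ∈ B γ} ∈ U)
    {𝒜 : Set (Set Ordinal.{0})} (h𝒜U : 𝒜 ⊆ U) (h𝒜 : #𝒜 ≤ lift.{1} μ) :
    ∃ D ∈ U, ∀ A ∈ 𝒜, cardLT (D \ A) μ := by
  rcases 𝒜.eq_empty_or_nonempty with rfl | hne
  · exact ⟨_, hS, fun A hA => hA.elim⟩
  rw [← card_ord μ, ← mk_Iio_ordinal] at h𝒜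
  obtain ⟨B, hB𝒜, hBsurj⟩ := exists_surjOn_of_mk_le hne h𝒜
  refine ⟨_, hnormal B fun γ _ => h𝒜U (hB𝒜 γ), fun A hA => ?_⟩
  obtain ⟨γ, hγ, rfl⟩ := hBsurj hA
  have hdiag : {β | β < μ.ord ∧ ∀ γ < β, β ∈ B γ} \ B γ ⊆ Iic γ :=
    fun β hβ => not_lt.1 fun hγβ => hβ.2 (hβ.1.2 γ hγβ)
  exact cardLT_mono hdiag (mk_Iic_lt_of_lt_ord hμ hγ)

theorem exists_almostDecreasing_subset (hinter : ∀ A ∈ U, ∀ B ∈ U, A ∩ B ∈ U)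
    (hpseudo : ∀ 𝒜 ⊆ U, #𝒜 ≤ lift.{1} μ → ∃ D ∈ U, ∀ A ∈ 𝒜, cardLT (D \ A) μ)
    {g : Ordinal.{0} → Set Ordinal.{0}} (hg : ∀ α, g α ∈ U) :
    ∃ A : Ordinal.{0} → Set Ordinal.{0}, (∀ α, A α ∈ U) ∧ (∀ α, A α ⊆ g α) ∧
      ∀ α₀ α₁, α₀ < α₁ → α₁ < (Order.succ μ).ord → cardLT (A α₁ \ A α₀) μ := by
  obtain ⟨A, hA⟩ := WellFoundedLT.exists_forall_fix (X := Set Ordinal.{0})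
    -- beyond `(succ μ).ord` an ordinal has more than `μ` predecessors, so nothing is asked there
    (P := fun α prior C => C ∈ U ∧ C ⊆ g α ∧ (α < (Order.succ μ).ord →
      ∀ β hβ, prior β hβ ∈ U → cardLT (C \ prior β hβ) μ)) fun α prior => by
    by_cases hα : α < (Order.succ μ).ord
    · have hcard :
          #(U ∩ range (fun β : Iio α => prior β β.2) : Set (Set Ordinal.{0})) ≤ lift.{1} μ := by
        refine (mk_le_mk_of_subset inter_subset_right).trans (mk_range_le.trans ?_)
        rw [mk_Iio_ordinal, lift_le, ← Order.lt_succ_iff, ← lt_ord]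
        exact hα
      obtain ⟨D, hDU, hD⟩ := hpseudo _ inter_subset_left hcard
      refine ⟨D ∩ g α, hinter _ hDU _ (hg α), inter_subset_right, fun _ β hβ hβU => ?_⟩
      exact cardLT_mono (sdiff_subset_sdiff_left inter_subset_left) (hD _ ⟨hβU, ⟨β, hβ⟩, rfl⟩)
    · exact ⟨g α, hg α, subset_rfl, fun h => absurd h hα⟩
  exact ⟨A, fun α => (hA α).1, fun α => (hA α).2.1,
    fun α₀ α₁ h₀₁ h₁ => (hA α₁).2.2 h₁ α₀ h₀₁ (hA α₀).1⟩

end Normal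

theorem stmt3_general (μ : Cardinal.{0}) (hμ : ℵ₀ < μ)
    (U : Set (Set Ordinal.{0}))
    (hU : IsUltrafilterOn (Set.Iio μ.ord) U)
    (hnormal : ∀ B : Ordinal.{0} → Set Ordinal.{0}, (∀ γ < μ.ord, B γ ∈ U) →
      {β | β < μ.ord ∧ ∀ γ < β, β ∈ B γ} ∈ U)
    (hch : 2 ^ μ = Order.succ μ) :
    ∃ A : Ordinal.{0} → Set Ordinal.{0},
      (∀ α < (Order.succ μ).ord, A α ∈ U) ∧
      (∀ α₀ α₁, α₀ < α₁ → α₁ < (Order.succ μ).ord → cardLT (A α₁ \ A α₀) μ) ∧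
      (∀ B ∈ U, ∃ α < (Order.succ μ).ord, cardLT (A α \ B) μ) := by
  obtain ⟨hsub, hS, -, hinter, -, -⟩ := hU
  obtain ⟨g, hgU, hgsurj⟩ :=
    exists_surjOn_of_mk_le ⟨_, hS⟩ (mk_le_mk_Iio_ord_succ_of_two_power_eq_succ hsub hch)
  obtain ⟨A, hAU, hAg, hAdecr⟩ := exists_almostDecreasing_subset hinter
    (fun _ h𝒜U h𝒜 => exists_mem_cardLT_diff_of_normal hμ.le hS hnormal h𝒜U h𝒜) hgU
  refine ⟨A, fun α _ => hAU α, hAdecr, fun B hB => ?_⟩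
  obtain ⟨α, hα, rfl⟩ := hgsurj hB
  refine ⟨α, hα, ?_⟩
  rw [cardLT, sdiff_eq_empty.2 (hAg α), mk_eq_zero]
  simpa using aleph0_pos.trans hμ

/-- If `U` is a normal ultrafilter on a measurable cardinal `μ`
(an uncountable cardinal carrying a `μ`-complete nonprincipal ultrafilter closed
under diagonal intersections) and `2^μ = μ⁺`, then there is a `⊆*`-decreasing
sequence `⟨A_α : α < μ⁺⟩` of members of `U` generating `U`. -/
theorem stmt3 (μ : Cardinal.{0}) (hμ : ℵ₀ < μ)
    (U : Set (Set Ordinal.{0}))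
    (hU : IsUltrafilterOn (Set.Iio μ.ord) U)
    (hcomplete : ∀ s : Set (Set Ordinal.{0}), s ⊆ U → s.Nonempty →
      #s < Cardinal.lift.{1,0} μ → ⋂₀ s ∈ U)
    (hnonprincipal : ∀ β < μ.ord, Set.Iio μ.ord \ {β} ∈ U)
    (hnormal : ∀ B : Ordinal.{0} → Set Ordinal.{0}, (∀ γ < μ.ord, B γ ∈ U) →
      {β | β < μ.ord ∧ ∀ γ < β, β ∈ B γ} ∈ U)
    (hch : 2 ^ μ = Order.succ μ) :
    ∃ A : Ordinal.{0} → Set Ordinal.{0},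
      (∀ α < (Order.succ μ).ord, A α ∈ U) ∧
      (∀ α₀ α₁, α₀ < α₁ → α₁ < (Order.succ μ).ord → cardLT (A α₁ \ A α₀) μ) ∧
      (∀ B ∈ U, ∃ α < (Order.succ μ).ord, cardLT (A α \ B) μ) :=
  stmt3_general μ hμ U hU hnormal hch
end

section
/- (Main Theorem) Assume: κ = cf(λ) < λ, E is a uniform ultrafilter on κ, λ is a strong limit cardinal, ⟨λ_i : i < κ⟩ is a strictly increasing sequence of regular cardinals with supremum λ, each U_i is a uniform ultrafilter on λ_i generated by a ⊆*-decreasing sequence ⟨A_{i,α} : α < θ_i⟩, and χ_λ̄ = tcf(∏_{i<κ} λ_i, <_E), χ_θ̄ = tcf(∏_{i<κ} θ_i, <_E) both exist. Then 𝔲_λ ≤ χ_λ̄ · χ_θ̄, i.e., there is a uniform ultrafilter on λ with a base of cardinality at most χ_λ̄ · χ_θ̄. -/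
open Cardinal Set

/-!
The ultrafilter is the `E`-limit `V` of the `U i`: `B ∈ V` iff `B ∩ λ_i ∈ U_i` for `E`-almost
all `i`. It is uniform because `E` is uniform and the `λ_i` are cofinal in `λ`. Its base consists of
the sets `⋃_{i ∈ Y} (A_{i, g_β(i)} \ f_α(i))` for `α < χ_λ̄`, `β < χ_θ̄`, `Y ∈ E`. Given `B ∈ V`,
choose for `E`-almost every `i` an index `h(i) < θ_i` with `A_{i,h(i)} ⊆* B`, and dominate `h` by
some `g_β`; then `A_{i,g_β(i)} \ B` is bounded in the regular `λ_i`, by `h'(i)` say, and dominating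
`h'` by some `f_α` gives a base set inside `B`. There are at most `χ_λ̄ · χ_θ̄ · 2^κ` base sets,
and `2^κ < λ ≤ χ_λ̄`: if `χ_λ̄ < λ`, then for all large `i` the `χ_λ̄` values `f_α(i)` are
bounded below the regular `λ_i > χ_λ̄`, so no `f_α` dominates that bound on an `E`-large set.
-/

namespace IsUltrafilterOn

variable {S : Set Ordinal.{0}} {U : Set (Set Ordinal.{0})}

theorem subset (hU : IsUltrafilterOn S U) {X : Set Ordinal.{0}} (hX : X ∈ U) : X ⊆ S :=
  hU.1 X hX

theorem self_mem (hU : IsUltrafilterOn S U) : S ∈ U :=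
  hU.2.1

theorem empty_notMem (hU : IsUltrafilterOn S U) : ∅ ∉ U :=
  hU.2.2.1

theorem inter_mem (hU : IsUltrafilterOn S U) {X Y : Set Ordinal.{0}} (hX : X ∈ U) (hY : Y ∈ U) :
    X ∩ Y ∈ U :=
  hU.2.2.2.1 X hX Y hY

theorem mem_of_superset (hU : IsUltrafilterOn S U) {X Y : Set Ordinal.{0}} (hX : X ∈ U)
    (hXY : X ⊆ Y) (hY : Y ⊆ S) : Y ∈ U :=
  hU.2.2.2.2.1 X hX Y hXY hY

theorem mem_or_diff_mem (hU : IsUltrafilterOn S U) {X : Set Ordinal.{0}} (hX : X ⊆ S) :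
    X ∈ U ∨ S \ X ∈ U :=
  hU.2.2.2.2.2 X hX

theorem mk_le_two_power {c : Cardinal.{0}} (hU : IsUltrafilterOn (Iio c.ord) U) :
    #U ≤ lift.{1} (2 ^ c) :=
  calc #U ≤ #(𝒫 Iio c.ord) := mk_le_mk_of_subset fun _ hX => hU.subset hX
    _ = lift.{1} (2 ^ c) := by
      rw [mk_powerset, mk_Iio_ordinal, card_ord, lift_power, lift_two]

end IsUltrafilterOn

theorem cardLT.mono {s t : Set Ordinal.{0}} {c : Cardinal.{0}} (hst : s ⊆ t) (ht : cardLT t c) :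
    cardLT s c :=
  (mk_le_mk_of_subset hst).trans_lt ht

theorem cardLT.diff_trans {X Y Z : Set Ordinal.{0}} {c : Cardinal.{0}} (hc : ℵ₀ ≤ c)
    (hXY : cardLT (X \ Y) c) (hYZ : cardLT (Y \ Z) c) : cardLT (X \ Z) c :=
  cardLT.mono (sdiff_triangle X Y Z) <|
    (mk_union_le _ _).trans_lt (add_lt_of_lt (aleph0_le_lift.2 hc) hXY hYZ)

theorem cardLT_Iio {b : Ordinal.{0}} {c : Cardinal.{0}} (hb : b < c.ord) : cardLT (Iio b) c := by
  rw [cardLT, mk_Iio_ordinal]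
  exact lift_lt.2 (lt_ord.1 hb)

theorem exists_subset_Iio_of_cardLT {c : Cardinal.{0}} (hc : c.IsRegular) {s : Set Ordinal.{0}}
    (hs : s ⊆ Iio c.ord) (hcard : cardLT s c) : ∃ η < c.ord, s ⊆ Iio η := by
  have hcof : #s < (Ordinal.lift.{1} c.ord).cof := by
    rw [← Ordinal.lift_cof, hc.cof_ord]
    exact hcard
  refine ⟨_, Ordinal.sSup_add_one_lt_of_lt_cof hcof fun i hi => hs hi, fun x hx => ?_⟩
  have hbdd : BddAbove ((· + 1) '' s) :=
    ⟨c.ord, by rintro _ ⟨y, hy, rfl⟩; exact Order.add_one_le_of_lt (hs hy)⟩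
  exact (Order.lt_add_one_iff.2 le_rfl).trans_le (le_csSup hbdd ⟨x, hx, rfl⟩)

def IsUniform (U : Set (Set Ordinal.{0})) (c : Cardinal.{0}) : Prop :=
  ∀ X ∈ U, cardEQ X c

namespace IsUniform

variable {U : Set (Set Ordinal.{0})} {c : Cardinal.{0}}

theorem notMem_of_cardLT (hU : IsUniform U c) {X : Set Ordinal.{0}} (hX : cardLT X c) : X ∉ U :=
  fun hXU => (hX : #X < _).ne (hU X hXU)

theorem exists_mem_ge (hU : IsUniform U c) {Y : Set Ordinal.{0}} (hY : Y ∈ U) {i : Ordinal.{0}}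
    (hi : i < c.ord) : ∃ j ∈ Y, i ≤ j := by
  by_contra! h
  exact hU.notMem_of_cardLT ((cardLT_Iio hi).mono h) hY

theorem diff_mem_of_cardLT (hU : IsUniform U c) (hUf : IsUltrafilterOn (Iio c.ord) U)
    {X C : Set Ordinal.{0}} (hX : X ∈ U) (hC : cardLT C c) : X \ C ∈ U := by
  refine (hUf.mem_or_diff_mem (sdiff_subset.trans (hUf.subset hX))).resolve_right fun h => ?_
  refine hU.notMem_of_cardLT (hC.mono ?_) (hUf.inter_mem hX h)
  rintro x ⟨hxX, -, hx⟩
  by_contra hxC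
  exact hx ⟨hxX, hxC⟩

end IsUniform

section Limit

variable (S I : Set Ordinal.{0}) (E : Set (Set Ordinal.{0})) (T : Ordinal.{0} → Set Ordinal.{0})
  (U : Ordinal.{0} → Set (Set Ordinal.{0}))

def limitIndices (B : Set Ordinal.{0}) : Set Ordinal.{0} :=
  {i | i ∈ I ∧ B ∩ T i ∈ U i}

def ultrafilterLimit : Set (Set Ordinal.{0}) :=
  {B | B ⊆ S ∧ limitIndices I T U B ∈ E}

variable {S I E T U}

theorem limitIndices_mono (hU : ∀ i ∈ I, IsUltrafilterOn (T i) (U i)) {X Y : Set Ordinal.{0}}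
    (hXY : X ⊆ Y) : limitIndices I T U X ⊆ limitIndices I T U Y :=
  fun i ⟨hi, hX⟩ =>
    ⟨hi, (hU i hi).mem_of_superset hX (inter_subset_inter_left _ hXY) inter_subset_right⟩

theorem inter_limitIndices_subset (hU : ∀ i ∈ I, IsUltrafilterOn (T i) (U i))
    (X Y : Set Ordinal.{0}) :
    limitIndices I T U X ∩ limitIndices I T U Y ⊆ limitIndices I T U (X ∩ Y) :=
  fun i ⟨⟨hi, hX⟩, _, hY⟩ =>
    ⟨hi, by rw [inter_inter_distrib_right]; exact (hU i hi).inter_mem hX hY⟩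

theorem diff_limitIndices_subset (hU : ∀ i ∈ I, IsUltrafilterOn (T i) (U i))
    (hT : ∀ i ∈ I, T i ⊆ S) (X : Set Ordinal.{0}) :
    I \ limitIndices I T U X ⊆ limitIndices I T U (S \ X) := by
  rintro i ⟨hi, hX⟩
  have hcompl : (S \ X) ∩ T i = T i \ (X ∩ T i) := by
    ext x
    constructor
    · rintro ⟨⟨-, hxX⟩, hxT⟩
      exact ⟨hxT, fun h => hxX h.1⟩
    · rintro ⟨hxT, hx⟩
      exact ⟨⟨hT i hi hxT, fun hxX => hx ⟨hxX, hxT⟩⟩, hxT⟩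
  refine ⟨hi, hcompl ▸ ?_⟩
  exact ((hU i hi).mem_or_diff_mem inter_subset_right).resolve_left fun h => hX ⟨hi, h⟩

theorem isUltrafilterOn_ultrafilterLimit (hE : IsUltrafilterOn I E)
    (hU : ∀ i ∈ I, IsUltrafilterOn (T i) (U i)) (hT : ∀ i ∈ I, T i ⊆ S) :
    IsUltrafilterOn S (ultrafilterLimit S I E T U) := by
  have hI : ∀ X, limitIndices I T U X ⊆ I := fun _ _ hi => hi.1
  refine ⟨fun _ hX => hX.1, ⟨subset_rfl, ?_⟩, ?_, ?_, ?_, ?_⟩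
  · refine hE.mem_of_superset hE.self_mem (fun i hi => ⟨hi, ?_⟩) (hI S)
    rw [inter_eq_self_of_subset_right (hT i hi)]
    exact (hU i hi).self_mem
  · rintro ⟨-, h⟩
    have hempty : limitIndices I T U ∅ = ∅ := eq_empty_of_forall_notMem fun i hi =>
      (hU i hi.1).empty_notMem (empty_inter (T i) ▸ hi.2)
    exact hE.empty_notMem (hempty ▸ h)
  · rintro X ⟨hXS, hX⟩ Y ⟨-, hY⟩
    exact ⟨inter_subset_left.trans hXS,
      hE.mem_of_superset (hE.inter_mem hX hY) (inter_limitIndices_subset hU X Y) (hI _)⟩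
  · rintro X ⟨-, hX⟩ Y hXY hYS
    exact ⟨hYS, hE.mem_of_superset hX (limitIndices_mono hU hXY) (hI Y)⟩
  · intro X hXS
    refine (hE.mem_or_diff_mem (hI X)).imp (fun h => ⟨hXS, h⟩) fun h => ⟨sdiff_subset, ?_⟩
    exact hE.mem_of_superset h (diff_limitIndices_subset hU hT X) (hI _)

end Limit

theorem mul_mul_le_mul_of_le {a b c : Cardinal} (ha : ℵ₀ ≤ a) (hc : c ≤ a) : a * b * c ≤ a * b :=
  calc a * b * c = a * c * b := mul_right_comm a b c
    _ ≤ a * a * b := by gcongr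
    _ = a * b := by rw [mul_eq_self ha]

theorem mk_range_le_mul {κ a b : Cardinal.{0}} {E : Set (Set Ordinal.{0})}
    (hE : IsUltrafilterOn (Iio κ.ord) E) (ha : ℵ₀ ≤ a) (hκa : 2 ^ κ ≤ a) {β : Type 1}
    (F : Iio a.ord × Iio b.ord × E → β) : #(range F) ≤ lift.{1} (a * b) :=
  calc #(range F) ≤ #(Iio a.ord × Iio b.ord × E) := mk_range_le
    _ ≤ lift.{1} a * (lift.{1} b * lift.{1} (2 ^ κ)) := by
      simp only [mk_prod, lift_id, mk_Iio_ordinal, card_ord]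
      gcongr
      exact hE.mk_le_two_power
    _ = lift.{1} (a * b * 2 ^ κ) := by rw [lift_mul, lift_mul, mul_assoc]
    _ ≤ lift.{1} (a * b) := lift_le.2 (mul_mul_le_mul_of_le ha hκa)

theorem exists_forall_lt_and_imp {o : Ordinal.{0}} {b : Ordinal.{0} → Ordinal.{0}}
    (hb : ∀ i < o, 0 < b i) {p : Ordinal.{0} → Prop} {q : Ordinal.{0} → Ordinal.{0} → Prop}
    (h : ∀ i < o, p i → ∃ η < b i, q i η) :
    ∃ h : Ordinal.{0} → Ordinal.{0}, ∀ i < o, h i < b i ∧ (p i → q i (h i)) := by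
  have hchoice : ∀ i, ∃ η, i < o → η < b i ∧ (p i → q i η) := by
    intro i
    by_cases hp : i < o ∧ p i
    · obtain ⟨η, hη, hq⟩ := h i hp.1 hp.2
      exact ⟨η, fun _ => ⟨hη, fun _ => hq⟩⟩
    · exact ⟨0, fun hi => ⟨hb i hi, fun hpi => absurd ⟨hi, hpi⟩ hp⟩⟩
  choose h hh using hchoice
  exact ⟨h, hh⟩

def IsCofinalModulo (E : Set (Set Ordinal.{0})) (κ : Cardinal.{0}) (b : Ordinal.{0} → Ordinal.{0})
    (χ : Cardinal.{0}) (f : Ordinal.{0} → Ordinal.{0} → Ordinal.{0}) : Prop :=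
  ∀ h : Ordinal.{0} → Ordinal.{0}, (∀ i < κ.ord, h i < b i) →
    ∃ α < χ.ord, {i | i < κ.ord ∧ h i < f α i} ∈ E

def tailUnion (D : Ordinal.{0} → Set Ordinal.{0}) (a : Ordinal.{0} → Ordinal.{0})
    (Y : Set Ordinal.{0}) : Set Ordinal.{0} :=
  ⋃ i ∈ Y, D i \ Iio (a i)

section Scale

variable {κ lam χ : Cardinal.{0}} {lam_ θ : Ordinal.{0} → Cardinal.{0}}
  {E : Set (Set Ordinal.{0})} {U : Ordinal.{0} → Set (Set Ordinal.{0})}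

theorem isUniform_ultrafilterLimit (hlam : Order.IsSuccLimit lam) (hE : IsUniform E κ)
    (hmono : MonotoneOn lam_ (Iio κ.ord)) (hcofinal : ∀ c < lam, ∃ i < κ.ord, c ≤ lam_ i)
    (hU : ∀ i < κ.ord, IsUniform (U i) (lam_ i)) :
    IsUniform (ultrafilterLimit (Iio lam.ord) (Iio κ.ord) E (fun i => Iio (lam_ i).ord) U) lam := by
  rintro X ⟨hXS, hX⟩
  have hlarge : ∀ c < lam, lift.{1} c ≤ #X := by
    intro c hc
    obtain ⟨i, hi, hci⟩ := hcofinal c hc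
    obtain ⟨j, ⟨hj, hXj⟩, hij⟩ := hE.exists_mem_ge hX hi
    calc lift.{1} c ≤ lift.{1} (lam_ j) := lift_le.2 (hci.trans (hmono hi hj hij))
      _ = #(X ∩ Iio (lam_ j).ord : Set Ordinal) := (hU j hj _ hXj).symm
      _ ≤ #X := mk_le_mk_of_subset inter_subset_left
  refine le_antisymm ?_ (le_of_forall_lt fun c hc => ?_)
  · simpa [mk_Iio_ordinal] using mk_le_mk_of_subset hXS
  · obtain ⟨c, rfl⟩ := mem_range_lift_of_le hc.le
    exact (lift_lt.2 (Order.lt_succ c)).trans_le (hlarge _ (hlam.succ_lt (lift_lt.1 hc)))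

theorem le_of_isCofinalModulo (hlam : Order.IsSuccLimit lam) (hE : IsUniform E κ)
    (hreg : ∀ i < κ.ord, (lam_ i).IsRegular) (hmono : MonotoneOn lam_ (Iio κ.ord))
    (hcofinal : ∀ c < lam, ∃ i < κ.ord, c ≤ lam_ i) {f : Ordinal.{0} → Ordinal.{0} → Ordinal.{0}}
    (hf : ∀ α < χ.ord, ∀ i < κ.ord, f α i < (lam_ i).ord)
    (hfcof : IsCofinalModulo E κ (fun i => (lam_ i).ord) χ f) : lam ≤ χ := by
  by_contra! hχ
  obtain ⟨i₀, hi₀, hχi₀⟩ := hcofinal _ (hlam.succ_lt hχ)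
  obtain ⟨h, hh⟩ := exists_forall_lt_and_imp (fun i hi => ord_pos.2 (hreg i hi).pos)
    (p := (i₀ ≤ ·)) (q := fun i η => ∀ α < χ.ord, f α i < η) fun i hi hi₀i => by
      have hχi : χ < lam_ i := (Order.lt_succ χ).trans_le (hχi₀.trans (hmono hi₀ hi hi₀i))
      obtain ⟨η, hη, hsub⟩ := exists_subset_Iio_of_cardLT (hreg i hi)
        (s := (f · i) '' Iio χ.ord) (by rintro _ ⟨α, hα, rfl⟩; exact hf α hα i hi)
        (mk_image_le.trans_lt (cardLT_Iio (ord_lt_ord.2 hχi)))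
      exact ⟨η, hη, fun α hα => hsub ⟨α, hα, rfl⟩⟩
  obtain ⟨α, hα, hT⟩ := hfcof h fun i hi => (hh i hi).1
  refine hE.notMem_of_cardLT ((cardLT_Iio hi₀).mono fun i hi => ?_) hT
  exact lt_of_not_ge fun hle => lt_asymm hi.2 ((hh i hi.1).2 hle α hα)

theorem tailUnion_mem_ultrafilterLimit (hE : IsUltrafilterOn (Iio κ.ord) E)
    (hU : ∀ i < κ.ord, IsUltrafilterOn (Iio (lam_ i).ord) (U i))
    (hUuni : ∀ i < κ.ord, IsUniform (U i) (lam_ i)) (hle : ∀ i < κ.ord, lam_ i ≤ lam)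
    {D : Ordinal.{0} → Set Ordinal.{0}} (hD : ∀ i < κ.ord, D i ∈ U i)
    {a : Ordinal.{0} → Ordinal.{0}} (ha : ∀ i < κ.ord, a i < (lam_ i).ord)
    {Y : Set Ordinal.{0}} (hY : Y ∈ E) :
    tailUnion D a Y ∈
      ultrafilterLimit (Iio lam.ord) (Iio κ.ord) E (fun i => Iio (lam_ i).ord) U := by
  have hpiece : ∀ i < κ.ord, D i \ Iio (a i) ∈ U i := fun i hi =>
    (hUuni i hi).diff_mem_of_cardLT (hU i hi) (hD i hi) (cardLT_Iio (ha i hi))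
  have hsub : ∀ i < κ.ord, D i \ Iio (a i) ⊆ Iio (lam_ i).ord := fun i hi =>
    (hU i hi).subset (hpiece i hi)
  refine ⟨iUnion₂_subset fun i hi => ?_, hE.mem_of_superset hY (fun i hi => ?_) fun _ hi => hi.1⟩
  · have hi := hE.subset hY hi
    exact (hsub i hi).trans (Iio_subset_Iio (ord_le_ord.2 (hle i hi)))
  · have hiκ := hE.subset hY hi
    exact ⟨hiκ, (hU i hiκ).mem_of_superset (hpiece i hiκ)
      (subset_inter (subset_biUnion_of_mem (u := fun i => D i \ Iio (a i)) hi) (hsub i hiκ))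
      inter_subset_right⟩

theorem exists_almost_subset (hE : IsUltrafilterOn (Iio κ.ord) E)
    (hU : ∀ i < κ.ord, IsUltrafilterOn (Iio (lam_ i).ord) (U i))
    (hinf : ∀ i < κ.ord, ℵ₀ ≤ lam_ i) {A : Ordinal.{0} → Ordinal.{0} → Set Ordinal.{0}}
    (hAdec : ∀ i < κ.ord, ∀ α α', α < α' → α' < (θ i).ord →
      cardLT (A i α' \ A i α) (lam_ i))
    (hAgen : ∀ i < κ.ord, ∀ B ∈ U i, ∃ α < (θ i).ord, cardLT (A i α \ B) (lam_ i))
    {g : Ordinal.{0} → Ordinal.{0} → Ordinal.{0}} (hg : ∀ β < χ.ord, ∀ i < κ.ord, g β i < (θ i).ord)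
    (hgcof : IsCofinalModulo E κ (fun i => (θ i).ord) χ g) {B : Set Ordinal.{0}}
    (hB : limitIndices (Iio κ.ord) (fun i => Iio (lam_ i).ord) U B ∈ E) :
    ∃ β < χ.ord, {i | i < κ.ord ∧ cardLT (A i (g β i) \ B) (lam_ i)} ∈ E := by
  obtain ⟨h, hh⟩ := exists_forall_lt_and_imp (b := fun i => (θ i).ord)
    (fun i hi => (hAgen i hi _ (hU i hi).self_mem).elim fun _ ha => pos_of_gt ha.1)
    (p := fun i => B ∩ Iio (lam_ i).ord ∈ U i) (q := fun i α => cardLT (A i α \ B) (lam_ i))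
    fun i hi hBi => (hAgen i hi _ hBi).imp fun _ ⟨ha, hsmall⟩ =>
      ⟨ha, hsmall.mono (sdiff_subset_sdiff_right inter_subset_left)⟩
  obtain ⟨β, hβ, hT⟩ := hgcof h fun i hi => (hh i hi).1
  refine ⟨β, hβ, hE.mem_of_superset (hE.inter_mem hB hT) ?_ fun i hi => hi.1⟩
  rintro i ⟨⟨hi, hBi⟩, -, hlt⟩
  exact ⟨hi, (hAdec i hi _ _ hlt (hg β hβ i hi)).diff_trans (hinf i hi) ((hh i hi).2 hBi)⟩

theorem exists_tailUnion_subset (hE : IsUltrafilterOn (Iio κ.ord) E)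
    (hreg : ∀ i < κ.ord, (lam_ i).IsRegular) {f : Ordinal.{0} → Ordinal.{0} → Ordinal.{0}}
    (hfcof : IsCofinalModulo E κ (fun i => (lam_ i).ord) χ f) {D : Ordinal.{0} → Set Ordinal.{0}}
    (hD : ∀ i < κ.ord, D i ⊆ Iio (lam_ i).ord) {B : Set Ordinal.{0}}
    (hB : {i | i < κ.ord ∧ cardLT (D i \ B) (lam_ i)} ∈ E) :
    ∃ α < χ.ord, ∃ Y ∈ E, tailUnion D (f α) Y ⊆ B := by
  obtain ⟨h, hh⟩ := exists_forall_lt_and_imp (fun i hi => ord_pos.2 (hreg i hi).pos)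
    (p := fun i => cardLT (D i \ B) (lam_ i)) (q := fun i η => D i \ B ⊆ Iio η)
    fun i hi hsmall => exists_subset_Iio_of_cardLT (hreg i hi) (sdiff_subset.trans (hD i hi)) hsmall
  obtain ⟨α, hα, hT⟩ := hfcof h fun i hi => (hh i hi).1
  refine ⟨α, hα, _, hE.inter_mem hB hT, fun x hx => ?_⟩
  obtain ⟨i, ⟨⟨hi, hsmall⟩, -, hlt⟩, hxD, hxf⟩ := mem_iUnion₂.1 hx
  by_contra hxB
  exact hxf (((hh i hi).2 hsmall ⟨hxD, hxB⟩).trans hlt)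

end Scale

theorem stmt5_general (lam κ χlam χθ : Cardinal.{0})
    (lam_ θ : Ordinal.{0} → Cardinal.{0})
    (E : Set (Set Ordinal.{0})) (U : Ordinal.{0} → Set (Set Ordinal.{0}))
    (A : Ordinal.{0} → Ordinal.{0} → Set Ordinal.{0})
    (f g : Ordinal.{0} → Ordinal.{0} → Ordinal.{0})
    -- (α) κ = cf(λ) < λ
    (hκlt : κ < lam)
    -- (β) E is a uniform ultrafilter on κ
    (hE : IsUltrafilterOn (Set.Iio κ.ord) E)
    (hEuni : ∀ Y ∈ E, cardEQ Y κ)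
    -- (γ) λ is a strong limit cardinal
    (hsl : lam.IsStrongLimit)
    -- (δ) ⟨λ_i : i < κ⟩ strictly increasing regular cardinals tending to λ
    (hreg : ∀ i < κ.ord, (lam_ i).IsRegular)
    (hmono : ∀ i j, i < j → j < κ.ord → lam_ i < lam_ j)
    (hlt : ∀ i < κ.ord, lam_ i < lam)
    (hcofinal : ∀ c < lam, ∃ i < κ.ord, c ≤ lam_ i)
    -- (ε) U_i is a uniform ultrafilter on λ_i
    (hU : ∀ i < κ.ord, IsUltrafilterOn (Set.Iio (lam_ i).ord) (U i))
    (hUuni : ∀ i < κ.ord, ∀ X ∈ U i, cardEQ X (lam_ i))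
    -- (ζ) U_i is generated by the ⊆*-decreasing sequence ⟨A i α : α < θ i⟩
    (hAmem : ∀ i < κ.ord, ∀ α < (θ i).ord, A i α ∈ U i)
    (hAdec : ∀ i < κ.ord, ∀ α α', α < α' → α' < (θ i).ord →
      cardLT (A i α' \ A i α) (lam_ i))
    (hAgen : ∀ i < κ.ord, ∀ B ∈ U i, ∃ α < (θ i).ord, cardLT (A i α \ B) (lam_ i))
    -- (η) χ_λ̄ = tcf(∏ λ_i, <_E) and χ_θ̄ = tcf(∏ θ_i, <_E), witnessed by scales
    (hf : ∀ α < χlam.ord, ∀ i < κ.ord, f α i < (lam_ i).ord)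
    (hfcof : ∀ h : Ordinal.{0} → Ordinal.{0}, (∀ i < κ.ord, h i < (lam_ i).ord) →
      ∃ α < χlam.ord, {i | i < κ.ord ∧ h i < f α i} ∈ E)
    (hg : ∀ β < χθ.ord, ∀ i < κ.ord, g β i < (θ i).ord)
    (hgcof : ∀ h : Ordinal.{0} → Ordinal.{0}, (∀ i < κ.ord, h i < (θ i).ord) →
      ∃ β < χθ.ord, {i | i < κ.ord ∧ h i < g β i} ∈ E) :
    ∃ V : Set (Set Ordinal.{0}), ∃ ℬ : Set (Set Ordinal.{0}),
      IsUltrafilterOn (Set.Iio lam.ord) V ∧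
      (∀ X ∈ V, cardEQ X lam) ∧
      ℬ ⊆ V ∧
      #ℬ ≤ Cardinal.lift.{1,0} (χlam * χθ) ∧
      (∀ B ∈ V, ∃ A' ∈ ℬ, cardLT (A' \ B) lam) := by
  have hmono' : MonotoneOn lam_ (Iio κ.ord) :=
    StrictMonoOn.monotoneOn fun i _ j hj hij => hmono i j hij hj
  have h2κ : 2 ^ κ < lam := hsl.isStrongPrelimit hκlt
  have hlamχ : lam ≤ χlam :=
    le_of_isCofinalModulo hsl.isSuccLimit hEuni hreg hmono' hcofinal hf hfcof
  have hTS : ∀ i < κ.ord, Iio (lam_ i).ord ⊆ Iio lam.ord := fun i hi =>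
    Iio_subset_Iio (ord_le_ord.2 (hlt i hi).le)
  refine ⟨ultrafilterLimit (Iio lam.ord) (Iio κ.ord) E (fun i => Iio (lam_ i).ord) U,
    range fun p : Iio χlam.ord × Iio χθ.ord × E =>
      tailUnion (fun i => A i (g p.2.1 i)) (f p.1) p.2.2,
    isUltrafilterOn_ultrafilterLimit hE hU hTS,
    isUniform_ultrafilterLimit hsl.isSuccLimit hEuni hmono' hcofinal hUuni, ?_,
    mk_range_le_mul hE (hsl.aleph0_le.trans hlamχ) (h2κ.le.trans hlamχ) _, ?_⟩
  · rintro _ ⟨⟨⟨α, hα⟩, ⟨β, hβ⟩, ⟨Y, hY⟩⟩, rfl⟩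
    exact tailUnion_mem_ultrafilterLimit hE hU hUuni (fun i hi => (hlt i hi).le)
      (fun i hi => hAmem i hi _ (hg β hβ i hi)) (fun i hi => hf α hα i hi) hY
  · rintro B ⟨-, hB⟩
    obtain ⟨β, hβ, hsmall⟩ := exists_almost_subset hE hU (fun i hi => (hreg i hi).aleph0_le)
      hAdec hAgen hg hgcof hB
    obtain ⟨α, hα, Y, hY, hsub⟩ := exists_tailUnion_subset hE hreg hfcof
      (fun i hi => (hU i hi).subset (hAmem i hi _ (hg β hβ i hi))) hsmall
    refine ⟨_, ⟨⟨⟨α, hα⟩, ⟨β, hβ⟩, ⟨Y, hY⟩⟩, rfl⟩, ?_⟩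
    rw [cardLT, sdiff_eq_empty.2 hsub, mk_eq_zero]
    exact pos_iff_ne_zero.2 ((lift_eq_zero.not).2 hsl.ne_zero)

/-- Main Theorem: under the hypotheses (α)–(η) below,
`𝔲_λ ≤ χ_λ̄ · χ_θ̄`: some uniform ultrafilter on `λ` has a base of cardinality
at most `χ_λ̄ · χ_θ̄`. -/
theorem stmt5 (lam κ χlam χθ : Cardinal.{0})
    (lam_ θ : Ordinal.{0} → Cardinal.{0})
    (E : Set (Set Ordinal.{0})) (U : Ordinal.{0} → Set (Set Ordinal.{0}))
    (A : Ordinal.{0} → Ordinal.{0} → Set Ordinal.{0})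
    (f g : Ordinal.{0} → Ordinal.{0} → Ordinal.{0})
    -- (α) κ = cf(λ) < λ
    (hcof : lam.ord.cof = κ) (hκlt : κ < lam)
    -- (β) E is a uniform ultrafilter on κ
    (hE : IsUltrafilterOn (Set.Iio κ.ord) E)
    (hEuni : ∀ Y ∈ E, cardEQ Y κ)
    -- (γ) λ is a strong limit cardinal
    (hsl : lam.IsStrongLimit)
    -- (δ) ⟨λ_i : i < κ⟩ strictly increasing regular cardinals tending to λ
    (hreg : ∀ i < κ.ord, (lam_ i).IsRegular)
    (hmono : ∀ i j, i < j → j < κ.ord → lam_ i < lam_ j)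
    (hlt : ∀ i < κ.ord, lam_ i < lam)
    (hcofinal : ∀ c < lam, ∃ i < κ.ord, c ≤ lam_ i)
    -- (ε) U_i is a uniform ultrafilter on λ_i
    (hU : ∀ i < κ.ord, IsUltrafilterOn (Set.Iio (lam_ i).ord) (U i))
    (hUuni : ∀ i < κ.ord, ∀ X ∈ U i, cardEQ X (lam_ i))
    -- (ζ) U_i is generated by the ⊆*-decreasing sequence ⟨A i α : α < θ i⟩
    (hAmem : ∀ i < κ.ord, ∀ α < (θ i).ord, A i α ∈ U i)
    (hAdec : ∀ i < κ.ord, ∀ α α', α < α' → α' < (θ i).ord →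
      cardLT (A i α' \ A i α) (lam_ i))
    (hAgen : ∀ i < κ.ord, ∀ B ∈ U i, ∃ α < (θ i).ord, cardLT (A i α \ B) (lam_ i))
    -- (η) χ_λ̄ = tcf(∏ λ_i, <_E) and χ_θ̄ = tcf(∏ θ_i, <_E), witnessed by scales
    (hχlam : χlam.IsRegular) (hχθ : χθ.IsRegular)
    (hf : ∀ α < χlam.ord, ∀ i < κ.ord, f α i < (lam_ i).ord)
    (hfinc : ∀ α α', α < α' → α' < χlam.ord → {i | i < κ.ord ∧ f α i < f α' i} ∈ E)
    (hfcof : ∀ h : Ordinal.{0} → Ordinal.{0}, (∀ i < κ.ord, h i < (lam_ i).ord) →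
      ∃ α < χlam.ord, {i | i < κ.ord ∧ h i < f α i} ∈ E)
    (hg : ∀ β < χθ.ord, ∀ i < κ.ord, g β i < (θ i).ord)
    (hginc : ∀ β β', β < β' → β' < χθ.ord → {i | i < κ.ord ∧ g β i < g β' i} ∈ E)
    (hgcof : ∀ h : Ordinal.{0} → Ordinal.{0}, (∀ i < κ.ord, h i < (θ i).ord) →
      ∃ β < χθ.ord, {i | i < κ.ord ∧ h i < g β i} ∈ E) :
    ∃ V : Set (Set Ordinal.{0}), ∃ ℬ : Set (Set Ordinal.{0}),
      IsUltrafilterOn (Set.Iio lam.ord) V ∧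
      (∀ X ∈ V, cardEQ X lam) ∧
      ℬ ⊆ V ∧
      #ℬ ≤ Cardinal.lift.{1,0} (χlam * χθ) ∧
      (∀ B ∈ V, ∃ A' ∈ ℬ, cardLT (A' \ B) lam) :=
  stmt5_general lam κ χlam χθ lam_ θ E U A f g hκlt hE hEuni hsl hreg hmono hlt hcofinal hU hUuni
    hAmem hAdec hAgen hf hfcof hg hgcof
end

section
/- Under the hypotheses of the main theorem, the family ℬ = {B_{α,β,Y} : α < χ_λ̄, β < χ_θ̄, Y ∈ E}, where B_{α,β,Y} = {ζ < λ : ∃ i ∈ Y (λ_{<i} ≤ ζ < λ_i ∧ ζ ∈ A_{i,g_β(i)} ∧ ζ > f_α(i))}, has the strong finite intersection property: every finite subfamily has intersection of cardinality λ. -/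
/-!
Let `Y = ⋂ₖ Y_k ∈ E`. As `E` is uniform, `Y` is unbounded in `κ`, so for every `μ < λ` some
`i ∈ Y` has `μ, κ ≤ λ_i`. Regularity of `λ_i` gives `λ_{<i} < λ_i`, and then the `U_i`-large set
of `ζ ∈ ⋂ₖ A_{i, g_{β_k}(i)}` above `λ_{<i}` and all `f_{α_k}(i)` lies in every `B_{α_k, β_k, Y_k}`;
it has size `λ_i ≥ μ`. As `λ` is a limit cardinal, the intersection has size `λ`.
-/

open Cardinal Set

/-- `λ_{<i} = sup{λ_j : j < i}` (as an ordinal). -/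
noncomputable def lamlt (lam_ : Ordinal.{0} → Cardinal.{0}) (i : Ordinal.{0}) : Ordinal.{0} :=
  sSup ((fun j => (lam_ j).ord) '' Set.Iio i)

/-- `B_{α,β,Y} = {ζ < λ : ∃ i ∈ Y (λ_{<i} ≤ ζ < λ_i ∧ ζ ∈ A_{i,g_β(i)} ∧ ζ > f_α(i))}`. -/
def Bset (lam_ : Ordinal.{0} → Cardinal.{0}) (A : Ordinal.{0} → Ordinal.{0} → Set Ordinal.{0})
    (f g : Ordinal.{0} → Ordinal.{0} → Ordinal.{0}) (α β : Ordinal.{0})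
    (Y : Set Ordinal.{0}) : Set Ordinal.{0} :=
  {ζ | ∃ i ∈ Y, lamlt lam_ i ≤ ζ ∧ ζ < (lam_ i).ord ∧ ζ ∈ A i (g β i) ∧ f α i < ζ}

namespace IsUltrafilterOn

variable {S : Set Ordinal.{0}} {U : Set (Set Ordinal.{0})}

lemma inter_iInter_mem (hU : IsUltrafilterOn S U) {n : ℕ} {C : Fin n → Set Ordinal.{0}}
    (hC : ∀ k, C k ∈ U) : S ∩ ⋂ k, C k ∈ U := by
  induction n with
  | zero => simpa using hU.2.1
  | succ m ih =>
    have hsucc : (S ∩ ⋂ k : Fin m, C k.succ) ∩ C 0 = S ∩ ⋂ k, C k := by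
      ext ζ
      simp only [mem_inter_iff, mem_iInter, Fin.forall_fin_succ]
      tauto
    exact hsucc ▸ hU.2.2.2.1 _ (ih fun k => hC k.succ) _ (hC 0)

lemma mem_of_cardLT_diff (hU : IsUltrafilterOn S U) {c : Cardinal.{0}}
    (huni : ∀ X ∈ U, cardEQ X c) {B : Set Ordinal.{0}} (hB : B ⊆ S) (hsmall : cardLT (S \ B) c) :
    B ∈ U :=
  (hU.2.2.2.2.2 B hB).resolve_right fun h => (huni _ h).not_lt hsmall

lemma Ioo_mem {c : Cardinal.{0}} (hU : IsUltrafilterOn (Iio c.ord) U) (huni : ∀ X ∈ U, cardEQ X c)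
    (hc : ℵ₀ ≤ c) {m : Ordinal.{0}} (hm : m < c.ord) : Ioo m c.ord ∈ U := by
  refine hU.mem_of_cardLT_diff huni (fun _ hζ => hζ.2) ?_
  have hsub : Iio c.ord \ Ioo m c.ord ⊆ Iio (Order.succ m) := fun ζ ⟨hζc, hζm⟩ =>
    Order.lt_succ_iff.2 (not_lt.1 fun h => hζm ⟨h, hζc⟩)
  calc #(↥(Iio c.ord \ Ioo m c.ord)) ≤ #(Iio (Order.succ m)) := mk_le_mk_of_subset hsub
    _ = lift (Order.succ m).card := mk_Iio_ordinal _
    _ < lift c := lift_lt.2 (lt_ord.1 ((isSuccLimit_ord hc).succ_lt hm))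

end IsUltrafilterOn

lemma exists_mem_gt_of_cardEQ {Y : Set Ordinal.{0}} {κ : Cardinal.{0}} (hκ : ℵ₀ ≤ κ)
    (hY : cardEQ Y κ) {b : Ordinal.{0}} (hb : b < κ.ord) : ∃ i ∈ Y, b < i := by
  by_contra! hYb
  have hsub : Y ⊆ Iio (Order.succ b) := fun i hi => Order.lt_succ_iff.2 (hYb i hi)
  have : lift κ ≤ lift (Order.succ b).card :=
    hY ▸ (mk_le_mk_of_subset hsub).trans_eq (mk_Iio_ordinal _)
  exact (lt_ord.1 ((isSuccLimit_ord hκ).succ_lt hb)).not_ge (lift_le.1 this)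

lemma lamlt_lt_ord {lam_ : Ordinal.{0} → Cardinal.{0}} {i : Ordinal.{0}}
    (hreg : (lam_ i).IsRegular) (hi : i.card < lam_ i) (hmono : ∀ j < i, lam_ j < lam_ i) :
    lamlt lam_ i < (lam_ i).ord := by
  refine Ordinal.sSup_lt_of_lt_cof ?_ ?_
  · calc #((fun j => (lam_ j).ord) '' Iio i) ≤ #(Iio i) := mk_image_le
      _ = lift i.card := mk_Iio_ordinal i
      _ < lift (lam_ i) := lift_lt.2 hi
      _ = (Ordinal.lift (lam_ i).ord).cof := by rw [← Ordinal.lift_cof, hreg.cof_ord]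
  · rintro _ ⟨j, hj, rfl⟩
    exact ord_lt_ord.2 (hmono j hj)

lemma Cardinal.mk_eq_lift_of_forall_lift_le {s : Set Ordinal.{0}} {c : Cardinal.{0}}
    (hc : Order.IsSuccLimit c) (hle : #s ≤ lift c) (h : ∀ μ < c, lift μ ≤ #s) :
    #s = lift c := by
  obtain ⟨ν, hν⟩ := mem_range_lift_of_le hle
  refine hle.antisymm (not_lt.1 fun hlt => ?_)
  rw [← hν, lift_lt] at hlt
  have := h _ (hc.succ_lt hlt)
  rw [← hν, lift_le] at this
  exact (Order.lt_succ ν).not_ge this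

lemma lift_le_mk_inter_iInter_Bset {lam : Cardinal.{0}} {lam_ : Ordinal.{0} → Cardinal.{0}}
    {U : Set (Set Ordinal.{0})} {A : Ordinal.{0} → Ordinal.{0} → Set Ordinal.{0}}
    {f g : Ordinal.{0} → Ordinal.{0} → Ordinal.{0}} {i : Ordinal.{0}} {n : ℕ}
    {p : Fin n → Ordinal.{0} × Ordinal.{0} × Set Ordinal.{0}}
    (hU : IsUltrafilterOn (Iio (lam_ i).ord) U) (huni : ∀ X ∈ U, cardEQ X (lam_ i))
    (hinf : ℵ₀ ≤ lam_ i) (hlamlt : lamlt lam_ i < (lam_ i).ord) (hlt : lam_ i < lam)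
    (hiY : ∀ k, i ∈ (p k).2.2) (hA : ∀ k, A i (g (p k).2.1 i) ∈ U)
    (hf : ∀ k, f (p k).1 i < (lam_ i).ord) :
    lift (lam_ i) ≤ #↥(Iio lam.ord ∩ ⋂ k, Bset lam_ A f g (p k).1 (p k).2.1 (p k).2.2) := by
  set m := max (lamlt lam_ i) (Finset.univ.sup fun k => f (p k).1 i)
  have hm : m < (lam_ i).ord :=
    max_lt hlamlt ((Finset.sup_lt_iff (bot_le.trans_lt hlamlt)).2 fun k _ => hf k)
  have hT : Ioo m (lam_ i).ord ∩ (Iio (lam_ i).ord ∩ ⋂ k, A i (g (p k).2.1 i)) ∈ U :=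
    hU.2.2.2.1 _ (hU.Ioo_mem huni hinf hm) _ (hU.inter_iInter_mem hA)
  refine (huni _ hT).symm.trans_le (mk_le_mk_of_subset ?_)
  rintro ζ ⟨⟨hmζ, hζ⟩, -, hζA⟩
  refine ⟨hζ.trans (ord_lt_ord.2 hlt), mem_iInter.2 fun k => ?_⟩
  have hfm : f (p k).1 i ≤ m :=
    (Finset.le_sup (f := fun k => f (p k).1 i) (Finset.mem_univ k)).trans (le_max_right _ _)
  exact ⟨i, hiY k, (le_max_left _ _).trans hmζ.le, hζ, mem_iInter.1 hζA k, hfm.trans_lt hmζ⟩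

theorem stmt6_general (lam κ χlam χθ : Cardinal.{0})
    (lam_ θ : Ordinal.{0} → Cardinal.{0})
    (E : Set (Set Ordinal.{0})) (U : Ordinal.{0} → Set (Set Ordinal.{0}))
    (A : Ordinal.{0} → Ordinal.{0} → Set Ordinal.{0})
    (f g : Ordinal.{0} → Ordinal.{0} → Ordinal.{0})
    -- (α) κ = cf(λ) < λ
    (hcof : lam.ord.cof = κ) (hκlt : κ < lam)
    -- (β) E is a uniform ultrafilter on κ
    (hE : IsUltrafilterOn (Set.Iio κ.ord) E)
    (hEuni : ∀ Y ∈ E, cardEQ Y κ)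
    -- (γ) λ is a strong limit cardinal
    (hsl : lam.IsStrongLimit)
    -- (δ) ⟨λ_i : i < κ⟩ strictly increasing regular cardinals tending to λ
    (hreg : ∀ i < κ.ord, (lam_ i).IsRegular)
    (hmono : ∀ i j, i < j → j < κ.ord → lam_ i < lam_ j)
    (hlt : ∀ i < κ.ord, lam_ i < lam)
    (hcofinal : ∀ c < lam, ∃ i < κ.ord, c ≤ lam_ i)
    -- (ε) U_i is a uniform ultrafilter on λ_i
    (hU : ∀ i < κ.ord, IsUltrafilterOn (Set.Iio (lam_ i).ord) (U i))
    (hUuni : ∀ i < κ.ord, ∀ X ∈ U i, cardEQ X (lam_ i))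
    -- (ζ) U_i is generated by the ⊆*-decreasing sequence ⟨A i α : α < θ i⟩
    (hAmem : ∀ i < κ.ord, ∀ α < (θ i).ord, A i α ∈ U i)
    -- (η) χ_λ̄ = tcf(∏ λ_i, <_E) and χ_θ̄ = tcf(∏ θ_i, <_E), witnessed by scales
    (hf : ∀ α < χlam.ord, ∀ i < κ.ord, f α i < (lam_ i).ord)
    (hg : ∀ β < χθ.ord, ∀ i < κ.ord, g β i < (θ i).ord) :
    ∀ n : ℕ, ∀ p : Fin n → Ordinal.{0} × Ordinal.{0} × Set Ordinal.{0},
      (∀ k, (p k).1 < χlam.ord ∧ (p k).2.1 < χθ.ord ∧ (p k).2.2 ∈ E) →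
      cardEQ (Set.Iio lam.ord ∩ ⋂ k, Bset lam_ A f g (p k).1 (p k).2.1 (p k).2.2) lam := by
  intro n p hp
  have hκ : ℵ₀ ≤ κ := hcof ▸ Ordinal.aleph0_le_cof_iff.2
    (Ordinal.one_lt_cof_iff.2 (isSuccLimit_ord hsl.aleph0_le))
  have hYE : Iio κ.ord ∩ ⋂ k, (p k).2.2 ∈ E := hE.inter_iInter_mem fun k => (hp k).2.2
  obtain ⟨i₀, hi₀, hκi₀⟩ := hcofinal κ hκlt
  refine Cardinal.mk_eq_lift_of_forall_lift_le hsl.isSuccLimit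
    ((mk_le_mk_of_subset inter_subset_left).trans_eq ?_) fun μ hμ => ?_
  · rw [mk_Iio_ordinal, card_ord]
  obtain ⟨i₁, hi₁, hμi₁⟩ := hcofinal μ hμ
  obtain ⟨i, ⟨hiκ, hiY⟩, hi⟩ := exists_mem_gt_of_cardEQ hκ (hEuni _ hYE) (max_lt hi₀ hi₁)
  have hi₀i : lam_ i₀ < lam_ i := hmono _ _ ((le_max_left _ _).trans_lt hi) hiκ
  have hi₁i : lam_ i₁ < lam_ i := hmono _ _ ((le_max_right _ _).trans_lt hi) hiκ
  have hlamlt : lamlt lam_ i < (lam_ i).ord :=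
    lamlt_lt_ord (hreg i hiκ) ((lt_ord.1 hiκ).trans (hκi₀.trans_lt hi₀i))
      fun j hj => hmono j i hj hiκ
  calc lift μ ≤ lift (lam_ i) := lift_le.2 (hμi₁.trans hi₁i.le)
    _ ≤ _ := lift_le_mk_inter_iInter_Bset (hU i hiκ) (hUuni i hiκ) (hreg i hiκ).aleph0_le
      hlamlt (hlt i hiκ) (mem_iInter.1 hiY) (fun k => hAmem i hiκ _ (hg _ (hp k).2.1 i hiκ))
      fun k => hf _ (hp k).1 i hiκ

/-- under the hypotheses of the main theorem, the family
`ℬ = {B_{α,β,Y} : α < χ_λ̄, β < χ_θ̄, Y ∈ E}` has the strong finite intersection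
property: every finite subfamily has intersection of cardinality `λ`. -/
theorem stmt6 (lam κ χlam χθ : Cardinal.{0})
    (lam_ θ : Ordinal.{0} → Cardinal.{0})
    (E : Set (Set Ordinal.{0})) (U : Ordinal.{0} → Set (Set Ordinal.{0}))
    (A : Ordinal.{0} → Ordinal.{0} → Set Ordinal.{0})
    (f g : Ordinal.{0} → Ordinal.{0} → Ordinal.{0})
    -- (α) κ = cf(λ) < λ
    (hcof : lam.ord.cof = κ) (hκlt : κ < lam)
    -- (β) E is a uniform ultrafilter on κ
    (hE : IsUltrafilterOn (Set.Iio κ.ord) E)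
    (hEuni : ∀ Y ∈ E, cardEQ Y κ)
    -- (γ) λ is a strong limit cardinal
    (hsl : lam.IsStrongLimit)
    -- (δ) ⟨λ_i : i < κ⟩ strictly increasing regular cardinals tending to λ
    (hreg : ∀ i < κ.ord, (lam_ i).IsRegular)
    (hmono : ∀ i j, i < j → j < κ.ord → lam_ i < lam_ j)
    (hlt : ∀ i < κ.ord, lam_ i < lam)
    (hcofinal : ∀ c < lam, ∃ i < κ.ord, c ≤ lam_ i)
    -- (ε) U_i is a uniform ultrafilter on λ_i
    (hU : ∀ i < κ.ord, IsUltrafilterOn (Set.Iio (lam_ i).ord) (U i))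
    (hUuni : ∀ i < κ.ord, ∀ X ∈ U i, cardEQ X (lam_ i))
    -- (ζ) U_i is generated by the ⊆*-decreasing sequence ⟨A i α : α < θ i⟩
    (hAmem : ∀ i < κ.ord, ∀ α < (θ i).ord, A i α ∈ U i)
    (hAdec : ∀ i < κ.ord, ∀ α α', α < α' → α' < (θ i).ord →
      cardLT (A i α' \ A i α) (lam_ i))
    (hAgen : ∀ i < κ.ord, ∀ B ∈ U i, ∃ α < (θ i).ord, cardLT (A i α \ B) (lam_ i))
    -- (η) χ_λ̄ = tcf(∏ λ_i, <_E) and χ_θ̄ = tcf(∏ θ_i, <_E), witnessed by scales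
    (hχlam : χlam.IsRegular) (hχθ : χθ.IsRegular)
    (hf : ∀ α < χlam.ord, ∀ i < κ.ord, f α i < (lam_ i).ord)
    (hfinc : ∀ α α', α < α' → α' < χlam.ord → {i | i < κ.ord ∧ f α i < f α' i} ∈ E)
    (hfcof : ∀ h : Ordinal.{0} → Ordinal.{0}, (∀ i < κ.ord, h i < (lam_ i).ord) →
      ∃ α < χlam.ord, {i | i < κ.ord ∧ h i < f α i} ∈ E)
    (hg : ∀ β < χθ.ord, ∀ i < κ.ord, g β i < (θ i).ord)
    (hginc : ∀ β β', β < β' → β' < χθ.ord → {i | i < κ.ord ∧ g β i < g β' i} ∈ E)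
    (hgcof : ∀ h : Ordinal.{0} → Ordinal.{0}, (∀ i < κ.ord, h i < (θ i).ord) →
      ∃ β < χθ.ord, {i | i < κ.ord ∧ h i < g β i} ∈ E) :
    ∀ n : ℕ, ∀ p : Fin n → Ordinal.{0} × Ordinal.{0} × Set Ordinal.{0},
      (∀ k, (p k).1 < χlam.ord ∧ (p k).2.1 < χθ.ord ∧ (p k).2.2 ∈ E) →
      cardEQ (Set.Iio lam.ord ∩ ⋂ k, Bset lam_ A f g (p k).1 (p k).2.1 (p k).2.2) lam :=
  stmt6_general lam κ χlam χθ lam_ θ E U A f g hcof hκlt hE hEuni hsl hreg hmono hlt hcofinal hU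
    hUuni hAmem hf hg
end
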